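/- Consider the chain complex 0 → ℤ →^{Φ_2} ℤ^2 →^{Φ_1} ℤ^4 → 0 where Φ_2(1) = (0,2) and Φ_1 sends the first basis vector to (−1,−1,1,1) and the second to 0. Then H_2 = 0, H_1 ≅ ℤ/2 generated by the class of the second basis vector of ℤ^2, and H_0 ≅ ℤ^3. (Bredon homology of pgg.) -/

import Mathlib

open LinearMap Submodule

noncomputable def Phi2 : ℤ →ₗ[ℤ] (Fin 2 → ℤ) :=
  LinearMap.toSpanSingleton ℤ (Fin 2 → ℤ) ![0, 2]

noncomputable def Phi1 : (Fin 2 → ℤ) →ₗ[ℤ] (Fin 4 → ℤ) :=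
  Matrix.toLin' !![-1, 0; -1, 0; 1, 0; 1, 0]

abbrev H1 : Type := ↥(ker Phi1) ⧸ (Submodule.comap (ker Phi1).subtype (range Phi2))

abbrev H0 : Type := (Fin 4 → ℤ) ⧸ (range Phi1)

lemma Phi1_apply (v : Fin 2 → ℤ) : Phi1 v = ![-v 0, -v 0, v 0, v 0] := by
  simp [Phi1, Matrix.toLin'_apply, Matrix.mulVec, dotProduct, Fin.sum_univ_two]

lemma Phi2_apply (c : ℤ) : Phi2 c = ![0, 2*c] := by
  funext i
  fin_cases i <;> simp [Phi2, LinearMap.toSpanSingleton_apply] <;> ring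

lemma mem_ker_Phi1 (v : Fin 2 → ℤ) : v ∈ ker Phi1 ↔ v 0 = 0 := by
  rw [LinearMap.mem_ker, Phi1_apply]
  constructor
  · intro h
    have := congrFun h 2
    simpa using this
  · intro h
    rw [h]; funext i; fin_cases i <;> simp

lemma mem_range_Phi2 (v : Fin 2 → ℤ) : v ∈ range Phi2 ↔ ∃ c, v = ![0, 2*c] := by
  constructor
  · rintro ⟨c, rfl⟩; exact ⟨c, (Phi2_apply c).symm ▸ rfl⟩
  · rintro ⟨c, rfl⟩; exact ⟨c, Phi2_apply c⟩

noncomputable def f1 : ↥(ker Phi1) →ₗ[ℤ] ZMod 2 :=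
  (Int.castRingHom (ZMod 2)).toIntLinearMap.comp
    ((LinearMap.proj 1 : (Fin 2 → ℤ) →ₗ[ℤ] ℤ).comp (ker Phi1).subtype)

lemma f1_surj : Function.Surjective f1 := by
  intro z
  obtain ⟨n, rfl⟩ := ZMod.intCast_surjective z
  refine ⟨⟨![0, n], by rw [mem_ker_Phi1]; simp⟩, ?_⟩
  simp [f1]

lemma f1_ker : ker f1 = Submodule.comap (ker Phi1).subtype (range Phi2) := by
  ext ⟨v, hv⟩
  rw [mem_ker_Phi1] at hv
  simp only [LinearMap.mem_ker, Submodule.mem_comap, Submodule.coe_subtype,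
    mem_range_Phi2, f1, LinearMap.comp_apply]
  constructor
  · intro h
    have : (2 : ℤ) ∣ v 1 := by
      have := (ZMod.intCast_zmod_eq_zero_iff_dvd (v 1) 2).mp (by simpa using h)
      exact_mod_cast this
    obtain ⟨c, hc⟩ := this
    exact ⟨c, by funext i; fin_cases i <;> simp [hv, hc]⟩
  · rintro ⟨c, hc⟩
    have : v 1 = 2 * c := by have := congrFun hc 1; simpa using this
    simp only [LinearMap.proj_apply, AddMonoidHom.coe_toIntLinearMap, RingHom.toAddMonoidHom_eq_coe, AddMonoidHom.coe_coe, Int.coe_castRingHom, this]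
    exact (ZMod.intCast_zmod_eq_zero_iff_dvd (2*c) 2).mpr ⟨c, rfl⟩

noncomputable def f0 : (Fin 4 → ℤ) →ₗ[ℤ] (Fin 3 → ℤ) :=
  LinearMap.pi fun i =>
    ![(LinearMap.proj 0 : (Fin 4 → ℤ) →ₗ[ℤ] ℤ) + LinearMap.proj 3,
      (LinearMap.proj 1 : (Fin 4 → ℤ) →ₗ[ℤ] ℤ) + LinearMap.proj 3,
      (LinearMap.proj 2 : (Fin 4 → ℤ) →ₗ[ℤ] ℤ) - LinearMap.proj 3] i

lemma f0_apply (x : Fin 4 → ℤ) : f0 x = ![x 0 + x 3, x 1 + x 3, x 2 - x 3] := by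
  funext i; fin_cases i <;> simp [f0]

lemma f0_surj : Function.Surjective f0 := by
  intro y
  refine ⟨![y 0, y 1, y 2, 0], ?_⟩
  rw [f0_apply]
  funext i; fin_cases i <;> simp

lemma f0_ker : ker f0 = range Phi1 := by
  ext x
  rw [LinearMap.mem_ker, f0_apply]
  constructor
  · intro h
    have h0 := congrFun h 0
    have h1 := congrFun h 1
    have h2 := congrFun h 2
    simp at h0 h1 h2
    refine ⟨![x 3, 0], ?_⟩
    rw [Phi1_apply]
    funext i; fin_cases i <;> simp <;> omega
  · rintro ⟨v, rfl⟩
    rw [Phi1_apply]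
    funext i; fin_cases i <;> simp

theorem stmt_13 :
    Subsingleton ↥(ker Phi2) ∧
    Nonempty (H1 ≃+ ZMod 2) ∧
    (∃ v : ↥(ker Phi1), (v : Fin 2 → ℤ) = ![0, 1] ∧
      ∀ x : H1, ∃ k : ℤ, x = k • (Submodule.Quotient.mk v : H1)) ∧
    Nonempty (H0 ≃ₗ[ℤ] (Fin 3 → ℤ)) := by
  refine ⟨?_, ?_, ?_, ?_⟩
  · constructor
    rintro ⟨a, ha⟩ ⟨b, hb⟩
    rw [LinearMap.mem_ker, Phi2_apply] at ha hb
    have ha2 := congrFun ha 1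
    have hb2 := congrFun hb 1
    simp at ha2 hb2
    ext
    simp [ha2, hb2]
  · exact ⟨((Submodule.quotEquivOfEq _ _ f1_ker.symm).trans
      (f1.quotKerEquivOfSurjective f1_surj)).toAddEquiv⟩
  · refine ⟨⟨![0, 1], by rw [mem_ker_Phi1]; simp⟩, rfl, ?_⟩
    intro x
    obtain ⟨⟨w, hw⟩, rfl⟩ := Submodule.Quotient.mk_surjective _ x
    refine ⟨w 1, ?_⟩
    rw [← Submodule.Quotient.mk_smul]
    congr 1
    ext i
    rw [mem_ker_Phi1] at hw
    fin_cases i <;> simp [hw]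
  · exact ⟨(Submodule.quotEquivOfEq _ _ f0_ker.symm).trans
      (f0.quotKerEquivOfSurjective f0_surj)⟩
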